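/- arXiv:2110.03202 — 2 statements merged into one kernel-verified Lean document; each statement's English description precedes it below -/
import Mathlib

section
/- There exists a constant C > 0 such that for all Q ≥ 2 and all K ≥ 1: Σ_{1 ≤ |ℓ| ≤ K} ( Σ_{d | ℓ, d ≤ Q} Q/d )^2 ≤ C·( K·Q^2·(Σ_{d₁,d₂ ≤ Q} gcd(d₁,d₂)/(d₁² d₂²)) + K·Q^2·log Q ), and moreover Σ_{d₁,d₂ ≥ 1} gcd(d₁,d₂)/(d₁² d₂²) converges. -/
/-!
Expanding the square, `(∑_{d ∣ ℓ, d ≤ Q} Q/d)² = ∑_{d₁, d₂ ≤ Q, [d₁, d₂] ∣ ℓ} Q²/(d₁d₂)`;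
exchanging summations, each pair `(d₁, d₂)` is counted by at most
`K / [d₁, d₂] = K (d₁, d₂)/(d₁d₂)` values `1 ≤ ℓ ≤ K`, and the negative `ℓ` double this.
Convergence follows from `(d₁, d₂) ≤ √(d₁d₂)`, which bounds the summand by `(d₁d₂)^(-3/2)`.
-/

open Finset

lemma sum_Icc_neg_filter_ne_zero_natAbs {M : Type*} [AddCommMonoid M] (f : ℕ → M) (K : ℕ) :
    ∑ ℓ ∈ (Icc (-(K : ℤ)) K).filter (· ≠ 0), f ℓ.natAbs = 2 • ∑ n ∈ Icc 1 K, f n := by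
  have hsplit : (Icc (-(K : ℤ)) K).filter (· ≠ 0) =
      (Icc 1 K).map Nat.castEmbedding ∪
        ((Icc 1 K).map Nat.castEmbedding).map (Equiv.neg ℤ).toEmbedding := by
    ext ℓ
    simp only [mem_filter, mem_Icc, mem_union, mem_map, Nat.castEmbedding_apply,
      Equiv.toEmbedding_apply, Equiv.neg_apply]
    constructor
    · rintro ⟨⟨h1, h2⟩, h3⟩
      rcases h3.lt_or_gt with h | h
      · exact Or.inr ⟨-ℓ, ⟨ℓ.natAbs, by omega, by omega⟩, by omega⟩
      · exact Or.inl ⟨ℓ.natAbs, by omega, by omega⟩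
    · rintro (⟨n, hn, rfl⟩ | ⟨_, ⟨n, hn, rfl⟩, rfl⟩) <;> omega
  have hdisj : Disjoint ((Icc 1 K).map Nat.castEmbedding)
      (((Icc 1 K).map Nat.castEmbedding).map (Equiv.neg ℤ).toEmbedding) := by
    simp only [disjoint_left, mem_map, mem_Icc, Nat.castEmbedding_apply,
      Equiv.toEmbedding_apply, Equiv.neg_apply]
    rintro _ ⟨n, hn, rfl⟩ ⟨_, ⟨m, hm, rfl⟩, h⟩
    omega
  rw [hsplit, sum_union hdisj, sum_map, sum_map, sum_map, two_nsmul]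
  simp

lemma sq_sum_divisors_filter_eq_sum_lcm_dvd {R : Type*} [CommSemiring R] (w : ℕ → R) {n : ℕ}
    (hn : n ≠ 0) (Q : ℕ) :
    (∑ d ∈ n.divisors.filter (· ≤ Q), w d) ^ 2 =
      ∑ d₁ ∈ Icc 1 Q, ∑ d₂ ∈ Icc 1 Q, if d₁.lcm d₂ ∣ n then w d₁ * w d₂ else 0 := by
  have hset : n.divisors.filter (· ≤ Q) = (Icc 1 Q).filter (· ∣ n) := by
    ext d
    simp only [mem_filter, Nat.mem_divisors, mem_Icc]
    constructor
    · rintro ⟨⟨hd, -⟩, hdQ⟩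
      exact ⟨⟨Nat.pos_of_dvd_of_pos hd (Nat.pos_of_ne_zero hn), hdQ⟩, hd⟩
    · rintro ⟨⟨-, hdQ⟩, hd⟩
      exact ⟨⟨hd, hn⟩, hdQ⟩
  rw [hset, sum_filter, sq, sum_mul_sum]
  simp_rw [ite_zero_mul_ite_zero, Nat.lcm_dvd_iff]

lemma sum_Icc_ite_dvd {M : Type*} [AddCommMonoid M] (K l : ℕ) (c : M) :
    ∑ n ∈ Icc 1 K, (if l ∣ n then c else 0) = (K / l) • c := by
  rw [← sum_filter, sum_const, ← Nat.Ioc_filter_dvd_card_eq_div, ← Icc_add_one_left_eq_Ioc,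
    zero_add]

lemma natCast_div_lcm_le (K a b : ℕ) : ((K / a.lcm b : ℕ) : ℝ) ≤ K * a.gcd b / (a * b) := by
  rcases eq_or_ne a 0 with rfl | ha
  · simp
  have hlcm : (a.gcd b : ℝ) * a.lcm b = a * b := by exact_mod_cast Nat.gcd_mul_lcm a b
  have hgcd : (a.gcd b : ℝ) ≠ 0 := by
    exact_mod_cast (Nat.gcd_pos_of_pos_left b (Nat.pos_of_ne_zero ha)).ne'
  calc ((K / a.lcm b : ℕ) : ℝ) ≤ K / a.lcm b := Nat.cast_div_le
    _ = K * a.gcd b / (a * b) := by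
      rw [← hlcm, mul_comm (a.gcd b : ℝ), mul_div_mul_right _ _ hgcd]

lemma sum_Icc_sq_sum_divisors_filter_le (Q K : ℕ) :
    ∑ n ∈ Icc 1 K, (∑ d ∈ n.divisors.filter (· ≤ Q), (Q : ℝ) / d) ^ 2 ≤
      K * Q ^ 2 * ∑ d₁ ∈ Icc 1 Q, ∑ d₂ ∈ Icc 1 Q,
        (Nat.gcd d₁ d₂ : ℝ) / ((d₁ : ℝ) ^ 2 * (d₂ : ℝ) ^ 2) := by
  calc ∑ n ∈ Icc 1 K, (∑ d ∈ n.divisors.filter (· ≤ Q), (Q : ℝ) / d) ^ 2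
      = ∑ n ∈ Icc 1 K, ∑ d₁ ∈ Icc 1 Q, ∑ d₂ ∈ Icc 1 Q,
          if d₁.lcm d₂ ∣ n then (Q : ℝ) / d₁ * (Q / d₂) else 0 :=
        sum_congr rfl fun n hn => sq_sum_divisors_filter_eq_sum_lcm_dvd _ (by simp at hn; omega) Q
    _ = ∑ d₁ ∈ Icc 1 Q, ∑ d₂ ∈ Icc 1 Q, ((K / d₁.lcm d₂ : ℕ) : ℝ) * ((Q : ℝ) / d₁ * (Q / d₂)) := by
        rw [sum_comm]
        refine sum_congr rfl fun d₁ _ => ?_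
        rw [sum_comm]
        simp_rw [sum_Icc_ite_dvd, nsmul_eq_mul]
    _ ≤ ∑ d₁ ∈ Icc 1 Q, ∑ d₂ ∈ Icc 1 Q,
          (K : ℝ) * d₁.gcd d₂ / (d₁ * d₂) * ((Q : ℝ) / d₁ * (Q / d₂)) := by
        gcongr
        exact natCast_div_lcm_le K _ _
    _ = K * Q ^ 2 * ∑ d₁ ∈ Icc 1 Q, ∑ d₂ ∈ Icc 1 Q,
          (Nat.gcd d₁ d₂ : ℝ) / ((d₁ : ℝ) ^ 2 * (d₂ : ℝ) ^ 2) := by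
        simp_rw [mul_sum]
        refine sum_congr rfl fun d₁ _ => sum_congr rfl fun d₂ _ => ?_
        ring

lemma rpow_neg_three_halves_eq {z : ℝ} (hz : 0 < z) : z ^ (-(3 / 2 : ℝ)) = √z / z ^ 2 := by
  rw [Real.sqrt_eq_rpow, ← Real.rpow_natCast, ← Real.rpow_sub hz]
  norm_num

lemma div_sq_mul_sq_le_rpow {g x y : ℝ} (hg : 0 ≤ g) (hgx : g ≤ x) (hgy : g ≤ y) :
    g / (x ^ 2 * y ^ 2) ≤ (x * y) ^ (-(3 / 2 : ℝ)) := by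
  rcases hg.eq_or_lt with rfl | hg
  · simpa using Real.rpow_nonneg (by nlinarith) _
  have hxy : 0 < x * y := by nlinarith
  have hg_le_sqrt : g ≤ √(x * y) := Real.le_sqrt_of_sq_le (by nlinarith)
  rw [rpow_neg_three_halves_eq hxy, mul_pow]
  gcongr

lemma summable_gcd_div_sq_mul_sq :
    Summable (fun p : ℕ × ℕ =>
      (Nat.gcd (p.1 + 1) (p.2 + 1) : ℝ) / (((p.1 : ℝ) + 1) ^ 2 * ((p.2 : ℝ) + 1) ^ 2)) := by
  have hf : Summable (fun n : ℕ => ((n : ℝ) + 1) ^ (-(3 / 2 : ℝ))) := by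
    simpa using (summable_nat_add_iff 1).mpr
      (Real.summable_nat_rpow.mpr (by norm_num : -(3 / 2 : ℝ) < -1))
  refine .of_nonneg_of_le (fun _ => by positivity) (fun p => ?_)
    (hf.mul_of_nonneg hf (fun _ => by positivity) (fun _ => by positivity))
  rw [← Real.mul_rpow (by positivity) (by positivity)]
  apply div_sq_mul_sq_le_rpow (Nat.cast_nonneg _)
  · exact_mod_cast Nat.gcd_le_left _ p.1.succ_pos
  · exact_mod_cast Nat.gcd_le_right _ p.2.succ_pos

theorem stmt_6 :
    (∃ C > 0, ∀ Q K : ℕ, 2 ≤ Q → 1 ≤ K →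
      ∑ ℓ ∈ (Finset.Icc (-(K : ℤ)) (K : ℤ)).filter (fun ℓ => ℓ ≠ 0),
          (∑ d ∈ (Nat.divisors ℓ.natAbs).filter (fun d => d ≤ Q), (Q : ℝ) / d) ^ 2 ≤
        C * ((K : ℝ) * Q ^ 2 *
              (∑ d₁ ∈ Finset.Icc 1 Q, ∑ d₂ ∈ Finset.Icc 1 Q,
                (Nat.gcd d₁ d₂ : ℝ) / ((d₁ : ℝ) ^ 2 * (d₂ : ℝ) ^ 2)) +
            (K : ℝ) * Q ^ 2 * Real.log Q)) ∧
    Summable (fun p : ℕ × ℕ =>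
      (Nat.gcd (p.1 + 1) (p.2 + 1) : ℝ) / (((p.1 : ℝ) + 1) ^ 2 * ((p.2 : ℝ) + 1) ^ 2)) := by
  refine ⟨⟨2, two_pos, fun Q K _ _ => ?_⟩, summable_gcd_div_sq_mul_sq⟩
  rw [sum_Icc_neg_filter_ne_zero_natAbs
    (fun n => (∑ d ∈ n.divisors.filter (· ≤ Q), (Q : ℝ) / d) ^ 2), nsmul_eq_mul, Nat.cast_ofNat]
  have hpositive := sum_Icc_sq_sum_divisors_filter_le Q K
  have hlog : 0 ≤ (K : ℝ) * Q ^ 2 * Real.log Q :=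
    mul_nonneg (by positivity) (Real.log_natCast_nonneg Q)
  linarith
end

section
/- Let a: ℕ → ℂ be supported on {1, …, Y} with |a(n)| ≤ n^{1/10} for all n, let s be real with 0 < s < 2, and let q ≥ Y^{10} be a positive integer. Then (1/φ(q))·Σ_{0 ≤ a' < q, gcd(a',q)=1} |Y^{−1/2} Σ_{n ≤ Y} a(n) e(a'n/q)|^s = ∫₀¹ |Y^{−1/2} Σ_{n ≤ Y} a(n) e(nα)|^s dα + O(Y^{−s}), with an absolute implied constant (depending only on s). -/
/-!
Put `F(α) = Y^{-1/2} ∑_{n ≤ Y} a(n) e(nα)` and `f = |F|^s`. Termwise, `|F| ≤ Y^{3/5}` and `F` is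
Lipschitz with constant `2π Y^{8/5}`; factoring `A^s - B^s = (A^{s/2} - B^{s/2})(A^{s/2} + B^{s/2})`
and using `|A^u - B^u| ≤ |A - B|^u` for `u ≤ 1` shows that `f` is Hölder of exponent `s/2` with
constant `K ≪ Y^{11s/10}`, uniformly in `0 < s < 2`.

Möbius inversion turns the sum over reduced residues into `∑_{d ∣ q} μ(d)` times Riemann sums of `f`
on the grids of mesh `d/q`, each within `K q^{1-s/2}` of the corresponding multiple of `∫ f`. With
`∑_{d ∣ q} |μ(d)| ≤ 2^{ω(q)}` and `q ≤ 2^{ω(q)} φ(q)` the error is at most `4^{ω(q)} K q^{-s/2}`.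
Finally `ω(q)! ≤ q` gives `4^{ω(q)} ≪_s q^{s/4}`, and `q ≥ Y^{10}` absorbs the powers of `Y`.
-/

open Finset MeasureTheory ArithmeticFunction
open Complex (I)
open scoped Real ArithmeticFunction.Moebius

lemma Complex.norm_exp_ofReal_mul_I_sub_exp_ofReal_mul_I_le (x y : ℝ) :
    ‖Complex.exp (x * I) - Complex.exp (y * I)‖ ≤ |x - y| := by
  have h : Complex.exp (x * I) - Complex.exp (y * I)
      = Complex.exp (y * I) * (Complex.exp (I * ↑(x - y)) - 1) := by
    rw [mul_sub, ← Complex.exp_add]; push_cast; ring_nf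
  rw [h, norm_mul, Complex.norm_exp_ofReal_mul_I, one_mul]
  exact Real.norm_exp_I_mul_ofReal_sub_one_le

lemma Real.abs_rpow_sub_rpow_le {u A B : ℝ} (hu0 : 0 ≤ u) (hu1 : u ≤ 1) (hA : 0 ≤ A)
    (hB : 0 ≤ B) : |A ^ u - B ^ u| ≤ |A - B| ^ u := by
  wlog hBA : B ≤ A generalizing A B
  · rw [abs_sub_comm, abs_sub_comm A]; exact this hB hA (le_of_not_ge hBA)
  have h := Real.rpow_add_le_add_rpow hB (sub_nonneg.2 hBA) hu0 hu1
  rw [add_sub_cancel] at h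
  rw [abs_of_nonneg (sub_nonneg.2 hBA), abs_le]
  constructor <;> nlinarith [Real.rpow_le_rpow hB hBA hu0, Real.rpow_nonneg (sub_nonneg.2 hBA) u]

lemma Real.abs_rpow_two_mul_sub_rpow_two_mul_le {u A B M : ℝ} (hu0 : 0 ≤ u) (hu1 : u ≤ 1)
    (hA : 0 ≤ A) (hB : 0 ≤ B) (hAM : A ≤ M) (hBM : B ≤ M) :
    |A ^ (2 * u) - B ^ (2 * u)| ≤ 2 * M ^ u * |A - B| ^ u := by
  have hsq : ∀ {C : ℝ}, 0 ≤ C → C ^ (2 * u) = C ^ u * C ^ u := fun hC => by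
    rw [two_mul, Real.rpow_add_of_nonneg hC hu0 hu0]
  have hsum : A ^ u + B ^ u ≤ 2 * M ^ u := by
    linarith [Real.rpow_le_rpow hA hAM hu0, Real.rpow_le_rpow hB hBM hu0]
  calc |A ^ (2 * u) - B ^ (2 * u)| = |A ^ u - B ^ u| * (A ^ u + B ^ u) := by
        rw [hsq hA, hsq hB, ← abs_of_nonneg (by positivity : 0 ≤ A ^ u + B ^ u), ← abs_mul]
        ring_nf
    _ ≤ |A - B| ^ u * (2 * M ^ u) :=
        mul_le_mul (Real.abs_rpow_sub_rpow_le hu0 hu1 hA hB) hsum (by positivity) (by positivity)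
    _ = 2 * M ^ u * |A - B| ^ u := mul_comm _ _

lemma abs_norm_rpow_sub_norm_rpow_le {E : Type*} [SeminormedAddCommGroup E] {F : ℝ → E}
    {M L s : ℝ} (hs0 : 0 ≤ s) (hs2 : s ≤ 2) (hL : 0 ≤ L) (hFM : ∀ x, ‖F x‖ ≤ M)
    (hFL : ∀ x y, ‖F x - F y‖ ≤ L * |x - y|) (x y : ℝ) :
    |‖F x‖ ^ s - ‖F y‖ ^ s| ≤ 2 * (M * L) ^ (s / 2) * |x - y| ^ (s / 2) := by
  have hM : 0 ≤ M := (norm_nonneg _).trans (hFM x)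
  have h := Real.abs_rpow_two_mul_sub_rpow_two_mul_le (u := s / 2) (by positivity) (by linarith)
    (norm_nonneg (F x)) (norm_nonneg (F y)) (hFM x) (hFM y)
  rw [mul_div_cancel₀ s two_ne_zero] at h
  calc |‖F x‖ ^ s - ‖F y‖ ^ s| ≤ 2 * M ^ (s / 2) * |‖F x‖ - ‖F y‖| ^ (s / 2) := h
    _ ≤ 2 * M ^ (s / 2) * (L * |x - y|) ^ (s / 2) := by
        gcongr
        exact (abs_norm_sub_norm_le _ _).trans (hFL x y)
    _ = 2 * (M * L) ^ (s / 2) * |x - y| ^ (s / 2) := by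
        rw [Real.mul_rpow hM hL, Real.mul_rpow hL (abs_nonneg _)]; ring

lemma norm_sum_mul_cexp_le {S : Finset ℕ} {c : ℕ → ℂ} {B : ℝ} (hc : ∀ n ∈ S, ‖c n‖ ≤ B)
    (α : ℝ) : ‖∑ n ∈ S, c n * Complex.exp (2 * π * I * (n * α))‖ ≤ #S * B := by
  refine (norm_sum_le _ _).trans ?_
  rw [← nsmul_eq_mul]
  refine sum_le_card_nsmul _ _ _ fun n hn => ?_
  rw [norm_mul, show 2 * π * I * (n * α) = ((2 * π * n * α : ℝ) : ℂ) * I by push_cast; ring,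
    Complex.norm_exp_ofReal_mul_I, mul_one]
  exact hc n hn

lemma norm_sum_mul_cexp_sub_le {S : Finset ℕ} {c : ℕ → ℂ} {B N : ℝ} (hc : ∀ n ∈ S, ‖c n‖ ≤ B)
    (hN : ∀ n ∈ S, (n : ℝ) ≤ N) (x y : ℝ) :
    ‖∑ n ∈ S, c n * Complex.exp (2 * π * I * (n * x)) -
        ∑ n ∈ S, c n * Complex.exp (2 * π * I * (n * y))‖ ≤ #S * (B * (2 * π * N * |x - y|)) := by
  rw [← sum_sub_distrib, ← nsmul_eq_mul]
  refine (norm_sum_le _ _).trans (sum_le_card_nsmul _ _ _ fun n hn => ?_)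
  have harg : ∀ z : ℝ, 2 * π * I * (n * z) = ((2 * π * n * z : ℝ) : ℂ) * I := fun z => by
    push_cast; ring
  rw [← mul_sub, norm_mul, harg, harg]
  gcongr
  · exact (norm_nonneg _).trans (hc n hn)
  · exact hc n hn
  calc _ ≤ |2 * π * n * x - 2 * π * n * y| :=
        Complex.norm_exp_ofReal_mul_I_sub_exp_ofReal_mul_I_le _ _
    _ = 2 * π * n * |x - y| := by
        rw [← mul_sub, abs_mul, abs_of_nonneg (by positivity)]
    _ ≤ 2 * π * N * |x - y| := by gcongr; exact hN n hn

lemma sum_range_filter_dvd {M : Type*} [AddCommMonoid M] (g : ℕ → M) {d q : ℕ} (hd : d ∣ q) :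
    ∑ a ∈ range q with d ∣ a, g a = ∑ b ∈ range (q / d), g (d * b) := by
  rcases Nat.eq_zero_or_pos d with rfl | hd0
  · simp [Nat.eq_zero_of_zero_dvd hd]
  obtain ⟨m, rfl⟩ := hd
  rw [Nat.mul_div_cancel_left m hd0]
  refine sum_nbij' (· / d) (d * ·) ?_ ?_ ?_ ?_ ?_
  · simp only [mem_filter, mem_range, and_imp]
    rintro a ha ⟨b, rfl⟩
    rw [Nat.mul_div_cancel_left b hd0]
    exact lt_of_mul_lt_mul_left ha hd0.le
  · simp only [mem_filter, mem_range]
    exact fun b hb => ⟨Nat.mul_lt_mul_of_pos_left hb hd0, dvd_mul_right d b⟩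
  · simp only [mem_filter, mem_range, and_imp]
    exact fun a _ hda => Nat.mul_div_cancel' hda
  · simp [Nat.mul_div_cancel_left _ hd0]
  · simp only [mem_filter, and_imp]
    intro a _ hda; rw [Nat.mul_div_cancel' hda]

lemma sum_divisors_moebius_eq_ite (R : Type*) [Ring R] (n : ℕ) :
    ∑ d ∈ n.divisors, (μ d : R) = if n = 1 then 1 else 0 := by
  have h := congrArg (fun f : ArithmeticFunction R => f n) (coe_moebius_mul_coe_zeta (R := R))
  simp only [coe_mul_zeta_apply, intCoe_apply, one_apply] at h
  exact h

lemma sum_range_coprime_eq_sum_divisors_moebius {R : Type*} [CommRing R] (g : ℕ → R) (q : ℕ) :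
    ∑ a ∈ range q with a.Coprime q, g a =
      ∑ d ∈ q.divisors, (μ d : R) * ∑ b ∈ range (q / d), g (d * b) := by
  have hgcd : ∀ a ∈ range q, (a.gcd q).divisors = {d ∈ q.divisors | d ∣ a} := by
    intro a ha
    ext d
    simp only [Nat.mem_divisors, mem_filter, Nat.dvd_gcd_iff]
    have : q ≠ 0 := by rintro rfl; simp at ha
    simp [Nat.gcd_eq_zero_iff, this]
    tauto
  calc ∑ a ∈ range q with a.Coprime q, g a
      = ∑ a ∈ range q, (∑ d ∈ (a.gcd q).divisors, (μ d : R)) * g a := by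
        rw [sum_filter]
        refine sum_congr rfl fun a _ => ?_
        simp [sum_divisors_moebius_eq_ite, Nat.coprime_iff_gcd_eq_one]
    _ = ∑ a ∈ range q, ∑ d ∈ q.divisors with d ∣ a, (μ d : R) * g a := by
        refine sum_congr rfl fun a ha => ?_
        rw [hgcd a ha, sum_mul]
    _ = ∑ d ∈ q.divisors, (μ d : R) * ∑ a ∈ range q with d ∣ a, g a := by
        rw [sum_comm' (t' := q.divisors) (s' := fun d => {a ∈ range q | d ∣ a})
          (by simp only [mem_filter]; tauto)]
        simp_rw [mul_sum]
    _ = ∑ d ∈ q.divisors, (μ d : R) * ∑ b ∈ range (q / d), g (d * b) := by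
        refine sum_congr rfl fun d hd => ?_
        rw [sum_range_filter_dvd g (Nat.dvd_of_mem_divisors hd)]

lemma Finset.factorial_card_le_prod {S : Finset ℕ} (hS : 0 ∉ S) : (#S).factorial ≤ ∏ n ∈ S, n := by
  induction S using Finset.induction_on_max with
  | empty => simp
  | insert a S hlt ih =>
    have haS : a ∉ S := fun h => lt_irrefl a (hlt a h)
    have hsub : S ⊆ Ico 1 a := fun n hn =>
      mem_Ico.2 ⟨Nat.pos_of_ne_zero fun h => hS (h ▸ mem_insert_of_mem hn), hlt n hn⟩
    have ha : a ≠ 0 := fun h => hS (h ▸ mem_insert_self a S)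
    have hcard : #S + 1 ≤ a := by
      have := card_le_card hsub
      rw [Nat.card_Ico] at this
      omega
    rw [card_insert_of_notMem haS, prod_insert haS, Nat.factorial_succ]
    exact Nat.mul_le_mul hcard (ih fun h => hS (mem_insert_of_mem h))

lemma Nat.factorial_card_primeFactors_le {q : ℕ} (hq : q ≠ 0) : (#q.primeFactors).factorial ≤ q :=
  (factorial_card_le_prod fun h => Nat.not_prime_zero (Nat.prime_of_mem_primeFactors h)).trans
    (Nat.le_of_dvd (Nat.pos_of_ne_zero hq) (Nat.prod_primeFactors_dvd q))

lemma Nat.pow_card_primeFactors_le {q : ℕ} (hq : q ≠ 0) {c : ℝ} (hc : 0 ≤ c) :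
    c ^ #q.primeFactors ≤ Real.exp c * q := by
  have h := Real.pow_div_factorial_le_exp _ hc #q.primeFactors
  rw [div_le_iff₀ (by positivity)] at h
  exact h.trans (mul_le_mul_of_nonneg_left (by exact_mod_cast factorial_card_primeFactors_le hq)
    (Real.exp_pos c).le)

lemma Nat.pow_card_primeFactors_le_rpow {q : ℕ} (hq : q ≠ 0) {c t : ℝ} (hc : 0 ≤ c) (ht : 0 < t) :
    c ^ #q.primeFactors ≤ Real.exp (c ^ t⁻¹) ^ t * (q : ℝ) ^ t := by
  rw [← Real.mul_rpow (Real.exp_pos _).le q.cast_nonneg]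
  calc c ^ #q.primeFactors = ((c ^ t⁻¹) ^ #q.primeFactors) ^ t := by
        rw [← Real.rpow_natCast, ← Real.rpow_natCast, ← Real.rpow_mul hc, ← Real.rpow_mul hc]
        field_simp
    _ ≤ (Real.exp (c ^ t⁻¹) * q) ^ t := by
        gcongr
        exact pow_card_primeFactors_le hq (by positivity)

lemma Nat.le_two_pow_card_primeFactors_mul_totient (q : ℕ) :
    q ≤ 2 ^ #q.primeFactors * q.totient := by
  have hpos : 0 < ∏ p ∈ q.primeFactors, (p - 1) :=
    prod_pos fun p hp => Nat.sub_pos_of_lt (Nat.prime_of_mem_primeFactors hp).one_lt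
  refine Nat.le_of_mul_le_mul_right ?_ hpos
  calc q * ∏ p ∈ q.primeFactors, (p - 1) = q.totient * ∏ p ∈ q.primeFactors, p :=
        (totient_mul_prod_primeFactors q).symm
    _ ≤ q.totient * ∏ p ∈ q.primeFactors, 2 * (p - 1) := by
        gcongr with p hp
        have := (Nat.prime_of_mem_primeFactors hp).two_le
        omega
    _ = 2 ^ #q.primeFactors * q.totient * ∏ p ∈ q.primeFactors, (p - 1) := by
        rw [prod_mul_distrib, prod_const]; ring

lemma Nat.sum_divisors_abs_moebius_le (q : ℕ) :
    ∑ d ∈ q.divisors, |(μ d : ℝ)| ≤ 2 ^ #q.primeFactors := by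
  rcases eq_or_ne q 0 with rfl | hq
  · simp
  calc ∑ d ∈ q.divisors, |(μ d : ℝ)| = ∑ d ∈ q.divisors with Squarefree d, |(μ d : ℝ)| := by
        rw [sum_filter_of_ne]
        intro d _ hd
        by_contra hsq
        simp [moebius_eq_zero_of_not_squarefree hsq] at hd
    _ ≤ ∑ d ∈ q.divisors with Squarefree d, 1 :=
        sum_le_sum fun d _ => by exact_mod_cast abs_moebius_le_one
    _ = 2 ^ #q.primeFactors := by
        rw [sum_divisors_filter_squarefree hq]
        simp [Nat.factors_eq]

section Holder

variable {f : ℝ → ℝ} {K e : ℝ}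

lemma abs_integral_sub_mul_le_of_holder (hf : Continuous f) (hK : 0 ≤ K) (he : 0 ≤ e)
    (hfK : ∀ x y, |f x - f y| ≤ K * |x - y| ^ e) {a b : ℝ} (hab : a ≤ b) :
    |(∫ x in a..b, f x) - (b - a) * f a| ≤ K * (b - a) ^ e * (b - a) := by
  have h : (∫ x in a..b, f x) - (b - a) * f a = ∫ x in a..b, (f x - f a) := by
    rw [intervalIntegral.integral_sub (hf.intervalIntegrable a b) intervalIntegrable_const,
      intervalIntegral.integral_const, smul_eq_mul]
  rw [h, ← Real.norm_eq_abs, ← abs_of_nonneg (sub_nonneg.2 hab)]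
  refine intervalIntegral.norm_integral_le_of_norm_le_const fun x hx => ?_
  rw [Set.uIoc_of_le hab] at hx
  calc ‖f x - f a‖ ≤ K * |x - a| ^ e := hfK x a
    _ ≤ K * |b - a| ^ e := by gcongr <;> linarith [hx.1, hx.2]

lemma abs_sum_range_sub_mul_integral_le_of_holder (hf : Continuous f) (hK : 0 ≤ K) (he : 0 ≤ e)
    (hfK : ∀ x y, |f x - f y| ≤ K * |x - y| ^ e) {m : ℕ} (hm : 0 < m) :
    |∑ b ∈ range m, f (b / m) - m * ∫ x in (0 : ℝ)..1, f x| ≤ K * (m : ℝ) ^ (1 - e) := by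
  have hm' : (0 : ℝ) < m := Nat.cast_pos.2 hm
  have hsplit : ∫ x in (0 : ℝ)..1, f x = ∑ b ∈ range m, ∫ x in (b / m : ℝ)..((b + 1) / m), f x := by
    have h : ∑ k ∈ range m, ∫ x in (k / m : ℝ)..((k + 1 : ℕ) / m), f x
        = ∫ x in ((0 : ℕ) / m : ℝ)..(m / m), f x :=
      intervalIntegral.sum_integral_adjacent_intervals fun k _ => hf.intervalIntegrable _ _
    simp only [Nat.cast_zero, zero_div, div_self hm'.ne', Nat.cast_succ] at h
    exact h.symm
  have hpiece : ∀ b : ℕ, |f (b / m) - m * ∫ x in (b / m : ℝ)..((b + 1) / m), f x|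
      ≤ K * (m : ℝ) ^ (-e) := by
    intro b
    have hlen : ((b : ℝ) + 1) / m - b / m = (m : ℝ)⁻¹ := by field_simp; ring
    have h := abs_integral_sub_mul_le_of_holder hf hK he hfK
      (div_le_div_of_nonneg_right (by linarith : (b : ℝ) ≤ b + 1) hm'.le)
    rw [hlen] at h
    calc |f (b / m) - m * ∫ x in (b / m : ℝ)..((b + 1) / m), f x|
        = m * |(∫ x in (b / m : ℝ)..((b + 1) / m), f x) - (m : ℝ)⁻¹ * f (b / m)| := by
          rw [← abs_of_pos hm', ← abs_mul, abs_of_pos hm', abs_sub_comm, mul_sub,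
            mul_inv_cancel_left₀ hm'.ne']
      _ ≤ m * (K * (m : ℝ)⁻¹ ^ e * (m : ℝ)⁻¹) := by gcongr
      _ = K * (m : ℝ) ^ (-e) := by
          rw [Real.inv_rpow hm'.le, Real.rpow_neg hm'.le]; field_simp
  calc |∑ b ∈ range m, f (b / m) - m * ∫ x in (0 : ℝ)..1, f x|
      = |∑ b ∈ range m, (f (b / m) - m * ∫ x in (b / m : ℝ)..((b + 1) / m), f x)| := by
        rw [sum_sub_distrib, ← mul_sum, ← hsplit]
    _ ≤ ∑ _b ∈ range m, K * (m : ℝ) ^ (-e) :=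
        (abs_sum_le_sum_abs _ _).trans (sum_le_sum fun b _ => hpiece b)
    _ = K * (m : ℝ) ^ (1 - e) := by
        rw [sum_const, card_range, nsmul_eq_mul, sub_eq_add_neg, Real.rpow_add hm', Real.rpow_one]
        ring

lemma abs_sum_range_sub_integral_le_of_mem_divisors (hf : Continuous f) (hK : 0 ≤ K)
    (he0 : 0 ≤ e) (he1 : e ≤ 1) (hfK : ∀ x y, |f x - f y| ≤ K * |x - y| ^ e) {d q : ℕ}
    (hd : d ∈ q.divisors) :
    |∑ b ∈ range (q / d), (f ((d * b : ℕ) / q) - ∫ x in (0 : ℝ)..1, f x)|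
      ≤ K * (q : ℝ) ^ (1 - e) := by
  have hm : 0 < q / d := Nat.div_pos (Nat.divisor_le hd) (Nat.pos_of_mem_divisors hd)
  have hd0 : (d : ℝ) ≠ 0 := Nat.cast_ne_zero.2 (Nat.pos_of_mem_divisors hd).ne'
  have harg : ∀ b : ℕ, ((d * b : ℕ) : ℝ) / q = b / (q / d : ℕ) := fun b => by
    rw [Nat.cast_div (Nat.dvd_of_mem_divisors hd) hd0]; push_cast; field_simp
  simp_rw [harg, sum_sub_distrib, sum_const, card_range, nsmul_eq_mul]
  refine (abs_sum_range_sub_mul_integral_le_of_holder hf hK he0 hfK hm).trans ?_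
  gcongr
  exact Nat.div_le_self q d

theorem abs_totient_inv_mul_sum_coprime_sub_integral_le (hf : Continuous f) (hK : 0 ≤ K)
    (he0 : 0 ≤ e) (he1 : e ≤ 1) (hfK : ∀ x y, |f x - f y| ≤ K * |x - y| ^ e) {q : ℕ}
    (hq : 0 < q) :
    |(q.totient : ℝ)⁻¹ * ∑ a ∈ range q with a.Coprime q, f (a / q) - ∫ x in Set.Icc (0 : ℝ) 1, f x|
      ≤ 4 ^ #q.primeFactors * K * (q : ℝ) ^ (-e) := by
  have hI : ∫ x in Set.Icc (0 : ℝ) 1, f x = ∫ x in (0 : ℝ)..1, f x := by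
    rw [intervalIntegral.integral_of_le zero_le_one, integral_Icc_eq_integral_Ioc]
  set I := ∫ x in (0 : ℝ)..1, f x
  have hq' : (0 : ℝ) < q := Nat.cast_pos.2 hq
  have hφ : (0 : ℝ) < q.totient := Nat.cast_pos.2 (Nat.totient_pos.2 hq)
  have hcard : #{a ∈ range q | a.Coprime q} = q.totient := by
    rw [Nat.totient_eq_card_coprime]
    exact congrArg _ (filter_congr fun a _ => Nat.coprime_comm)
  have hcentered : (q.totient : ℝ)⁻¹ * ∑ a ∈ range q with a.Coprime q, f (a / q) - I
      = (q.totient : ℝ)⁻¹ * ∑ a ∈ range q with a.Coprime q, (f (a / q) - I) := by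
    rw [sum_sub_distrib, sum_const, hcard, nsmul_eq_mul]
    field_simp
  have hsum : |∑ a ∈ range q with a.Coprime q, (f (a / q) - I)|
      ≤ 2 ^ #q.primeFactors * (K * (q : ℝ) ^ (1 - e)) := by
    rw [sum_range_coprime_eq_sum_divisors_moebius]
    refine (abs_sum_le_sum_abs _ _).trans ?_
    simp_rw [abs_mul]
    calc ∑ d ∈ q.divisors, |(μ d : ℝ)| * |∑ b ∈ range (q / d), (f ((d * b : ℕ) / q) - I)|
        ≤ ∑ d ∈ q.divisors, |(μ d : ℝ)| * (K * (q : ℝ) ^ (1 - e)) :=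
          sum_le_sum fun d hd => mul_le_mul_of_nonneg_left
            (abs_sum_range_sub_integral_le_of_mem_divisors hf hK he0 he1 hfK hd) (abs_nonneg _)
      _ ≤ 2 ^ #q.primeFactors * (K * (q : ℝ) ^ (1 - e)) := by
          rw [← sum_mul]
          gcongr
          exact Nat.sum_divisors_abs_moebius_le q
  have htotient : (q.totient : ℝ)⁻¹ ≤ 2 ^ #q.primeFactors * (q : ℝ)⁻¹ := by
    rw [inv_le_comm₀ hφ (by positivity), mul_inv, inv_inv, ← div_eq_inv_mul,
      div_le_iff₀' (by positivity)]
    exact_mod_cast Nat.le_two_pow_card_primeFactors_mul_totient q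
  rw [hI, hcentered, abs_mul, abs_of_pos (inv_pos.2 hφ)]
  calc (q.totient : ℝ)⁻¹ * |∑ a ∈ range q with a.Coprime q, (f (a / q) - I)|
      ≤ 2 ^ #q.primeFactors * (q : ℝ)⁻¹ * (2 ^ #q.primeFactors * (K * (q : ℝ) ^ (1 - e))) := by
        gcongr
    _ = 4 ^ #q.primeFactors * K * (q : ℝ) ^ (-e) := by
        rw [Real.rpow_sub hq', Real.rpow_one, Real.rpow_neg hq'.le,
          show (4 : ℝ) = 2 * 2 by norm_num, mul_pow]
        field_simp

end Holder

lemma norm_ofReal_natCast_rpow (Y : ℕ) (r : ℝ) : ‖(((Y : ℝ) ^ r : ℝ) : ℂ)‖ = (Y : ℝ) ^ r := by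
  rw [Complex.norm_real, Real.norm_of_nonneg (by positivity)]

section NormalizedExpSum

variable {Y : ℕ} {a : ℕ → ℂ}

noncomputable def normalizedExpSum (Y : ℕ) (a : ℕ → ℂ) (α : ℝ) : ℂ :=
  (((Y : ℝ) ^ (-(1 : ℝ) / 2) : ℝ) : ℂ) * ∑ n ∈ Icc 1 Y, a n * Complex.exp (2 * π * I * (n * α))

lemma continuous_normalizedExpSum : Continuous (normalizedExpSum Y a) := by
  unfold normalizedExpSum
  fun_prop

lemma norm_normalizedExpSum_le {B : ℝ} (ha : ∀ n ∈ Icc 1 Y, ‖a n‖ ≤ B) (α : ℝ) :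
    ‖normalizedExpSum Y a α‖ ≤ (Y : ℝ) ^ (-(1 : ℝ) / 2) * (Y * B) := by
  rw [normalizedExpSum, norm_mul, norm_ofReal_natCast_rpow]
  gcongr
  simpa using norm_sum_mul_cexp_le ha α

lemma norm_normalizedExpSum_sub_le {B : ℝ} (ha : ∀ n ∈ Icc 1 Y, ‖a n‖ ≤ B) (x y : ℝ) :
    ‖normalizedExpSum Y a x - normalizedExpSum Y a y‖
      ≤ (Y : ℝ) ^ (-(1 : ℝ) / 2) * (Y * (B * (2 * π * Y))) * |x - y| := by
  rw [normalizedExpSum, normalizedExpSum, ← mul_sub, norm_mul, norm_ofReal_natCast_rpow,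
    mul_assoc _ _ |x - y|]
  gcongr
  have hN : ∀ n ∈ Icc 1 Y, (n : ℝ) ≤ Y := fun n hn => by exact_mod_cast (mem_Icc.1 hn).2
  refine (norm_sum_mul_cexp_sub_le ha hN x y).trans_eq ?_
  simp only [Nat.card_Icc, add_tsub_cancel_right]
  ring

lemma abs_norm_normalizedExpSum_rpow_sub_le {s : ℝ} (hs0 : 0 ≤ s) (hs2 : s ≤ 2) (hY : 0 < Y)
    (ha : ∀ n, ‖a n‖ ≤ (n : ℝ) ^ ((1 : ℝ) / 10)) (x y : ℝ) :
    |‖normalizedExpSum Y a x‖ ^ s - ‖normalizedExpSum Y a y‖ ^ s|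
      ≤ 2 * (2 * π * (Y : ℝ) ^ ((11 : ℝ) / 5)) ^ (s / 2) * |x - y| ^ (s / 2) := by
  have hY' : (0 : ℝ) < Y := Nat.cast_pos.2 hY
  have hB : ∀ n ∈ Icc 1 Y, ‖a n‖ ≤ (Y : ℝ) ^ ((1 : ℝ) / 10) := fun n hn =>
    (ha n).trans (by gcongr; exact_mod_cast (mem_Icc.1 hn).2)
  have hML : (Y : ℝ) ^ (-(1 : ℝ) / 2) * (Y * (Y : ℝ) ^ ((1 : ℝ) / 10)) *
      ((Y : ℝ) ^ (-(1 : ℝ) / 2) * (Y * ((Y : ℝ) ^ ((1 : ℝ) / 10) * (2 * π * Y))))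
        = 2 * π * (Y : ℝ) ^ ((11 : ℝ) / 5) := by
    rw [show (11 : ℝ) / 5 = -1 / 2 + 1 + 1 / 10 + (-1 / 2 + 1 + 1 / 10 + 1) by norm_num]
    simp only [Real.rpow_add hY', Real.rpow_one]
    ring
  rw [← hML]
  exact abs_norm_rpow_sub_norm_rpow_le hs0 hs2 (by positivity) (norm_normalizedExpSum_le hB)
    (norm_normalizedExpSum_sub_le hB) x y

end NormalizedExpSum

lemma four_pow_card_primeFactors_mul_le {s : ℝ} (hs : 0 < s) {Y q : ℕ} (hY : 1 ≤ Y)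
    (hq : Y ^ 10 ≤ q) :
    4 ^ #q.primeFactors * (2 * (2 * π * (Y : ℝ) ^ ((11 : ℝ) / 5)) ^ (s / 2)) * (q : ℝ) ^ (-(s / 2))
      ≤ 2 * (2 * π) ^ (s / 2) * Real.exp (4 ^ (s / 4)⁻¹) ^ (s / 4) * (Y : ℝ) ^ (-s) := by
  have hY' : (1 : ℝ) ≤ Y := Nat.one_le_cast.2 hY
  have hYq : (Y : ℝ) ^ (10 : ℝ) ≤ q := by exact_mod_cast hq
  have hq' : (0 : ℝ) < q := (by positivity : (0 : ℝ) < (Y : ℝ) ^ (10 : ℝ)).trans_le hYq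
  set E := Real.exp (4 ^ (s / 4)⁻¹) ^ (s / 4)
  have hω : (4 : ℝ) ^ #q.primeFactors ≤ E * (q : ℝ) ^ (s / 4) :=
    Nat.pow_card_primeFactors_le_rpow (Nat.cast_pos.1 hq').ne' (by norm_num) (by positivity)
  have hqY : (q : ℝ) ^ (-(s / 4)) ≤ (Y : ℝ) ^ (-(5 * s / 2)) := by
    calc (q : ℝ) ^ (-(s / 4)) ≤ ((Y : ℝ) ^ (10 : ℝ)) ^ (-(s / 4)) :=
          Real.rpow_le_rpow_of_nonpos (by positivity) hYq (by linarith)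
      _ = (Y : ℝ) ^ (-(5 * s / 2)) := by rw [← Real.rpow_mul (by positivity)]; ring_nf
  calc _ ≤ E * (q : ℝ) ^ (s / 4) * (2 * (2 * π * (Y : ℝ) ^ ((11 : ℝ) / 5)) ^ (s / 2))
          * (q : ℝ) ^ (-(s / 2)) := by gcongr
    _ = 2 * (2 * π) ^ (s / 2) * E * ((Y : ℝ) ^ (11 * s / 10) * (q : ℝ) ^ (-(s / 4))) := by
        rw [Real.mul_rpow (by positivity) (by positivity), ← Real.rpow_mul (by positivity),
          show -(s / 4) = s / 4 + -(s / 2) by ring, Real.rpow_add hq']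
        ring_nf
    _ ≤ 2 * (2 * π) ^ (s / 2) * E * ((Y : ℝ) ^ (11 * s / 10) * (Y : ℝ) ^ (-(5 * s / 2))) := by
        gcongr
    _ ≤ 2 * (2 * π) ^ (s / 2) * E * (Y : ℝ) ^ (-s) := by
        rw [← Real.rpow_add (by positivity)]
        gcongr
        linarith

open MeasureTheory in
theorem stmt_11 (s : ℝ) (hs0 : 0 < s) (hs2 : s < 2) :
    ∃ C > 0, ∀ (Y q : ℕ) (a : ℕ → ℂ), 1 ≤ Y → Y ^ 10 ≤ q →
      (∀ n, a n ≠ 0 → 1 ≤ n ∧ n ≤ Y) →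
      (∀ n, ‖a n‖ ≤ (n : ℝ) ^ ((1 : ℝ) / 10)) →
      |(1 / (Nat.totient q : ℝ)) *
          ∑ a' ∈ (Finset.range q).filter (fun a' => Nat.Coprime a' q),
            ‖(((Y : ℝ) ^ (-(1 : ℝ) / 2) : ℝ) : ℂ) *
              ∑ n ∈ Finset.Icc 1 Y, a n *
                Complex.exp (2 * Real.pi * Complex.I * ((a' : ℂ) * n / (q : ℂ)))‖ ^ s -
        ∫ α in Set.Icc (0 : ℝ) 1,
            ‖(((Y : ℝ) ^ (-(1 : ℝ) / 2) : ℝ) : ℂ) *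
              ∑ n ∈ Finset.Icc 1 Y, a n *
                Complex.exp (2 * Real.pi * Complex.I * (n * (α : ℂ)))‖ ^ s| ≤
        C * (Y : ℝ) ^ (-s) := by
  refine ⟨2 * (2 * π) ^ (s / 2) * Real.exp (4 ^ (s / 4)⁻¹) ^ (s / 4), by positivity,
    fun Y q a hY hq _ ha => ?_⟩
  have hdisc : ∀ a' : ℕ, ‖(((Y : ℝ) ^ (-(1 : ℝ) / 2) : ℝ) : ℂ) * ∑ n ∈ Icc 1 Y,
      a n * Complex.exp (2 * π * I * ((a' : ℂ) * n / (q : ℂ)))‖ ^ s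
        = ‖normalizedExpSum Y a (a' / q)‖ ^ s := fun a' => by
    simp only [normalizedExpSum]
    congr 4 with n
    push_cast
    ring_nf
  simp only [hdisc, one_div]
  exact (abs_totient_inv_mul_sum_coprime_sub_integral_le
    (continuous_normalizedExpSum.norm.rpow_const fun _ => Or.inr hs0.le) (by positivity)
    (by positivity) (by linarith) (abs_norm_normalizedExpSum_rpow_sub_le hs0.le hs2.le hY ha)
    ((Nat.pow_pos hY).trans_le hq)).trans (four_pow_card_primeFactors_mul_le hs0 hY hq)
end
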